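/- The region Ω = S² \ (Γ¹ ∪ Γ² ∪ Γ³), where Γ¹, Γ², Γ³ are three alternate closed arcs of length π/3 of the equator, contains no closed geodesic of S². -/

import Mathlib

open Real

/-- The set of angles belonging to the three removed ("alternate") closed arcs of
length `π/3`: the equator is divided into six arcs `[mπ/3, (m+1)π/3]` and the arcs
with `m` even are removed. -/
def removedAngles : Set ℝ :=
  {θ | ∃ m : ℤ, Even m ∧ (m : ℝ) * (π / 3) ≤ θ ∧ θ ≤ ((m : ℝ) + 1) * (π / 3)}

/-- The point of the equator of `S²` with angle `θ`. -/
noncomputable def equatorPoint (θ : ℝ) : EuclideanSpace ℝ (Fin 3) :=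
  (WithLp.equiv 2 (Fin 3 → ℝ)).symm ![Real.cos θ, Real.sin θ, 0]

/-- The union `Γ¹ ∪ Γ² ∪ Γ³` of the three removed closed equatorial arcs. -/
def removedArcs : Set (EuclideanSpace ℝ (Fin 3)) :=
  {p | ∃ θ ∈ removedAngles, p = equatorPoint θ}

/-- Kendall's region `Ω = S² \ (Γ¹ ∪ Γ² ∪ Γ³)`. -/
def Omega : Set (EuclideanSpace ℝ (Fin 3)) :=
  Metric.sphere (0 : EuclideanSpace ℝ (Fin 3)) 1 \ removedArcs

/-!
A plane through the origin meets the equatorial plane in a line, so every great circle contains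
a pair of antipodal equator points `equatorPoint θ` and `equatorPoint (θ + π)`. The six arcs
`[mπ/3, (m+1)π/3]` cover the equator and adding `π` shifts `m` by `3`, turning an odd index
into an even one: one of the two antipodes always lies on a removed arc.
-/

lemma mem_removedAngles_or_add_pi_mem (θ : ℝ) : θ ∈ removedAngles ∨ θ + π ∈ removedAngles := by
  have hπ : 0 < π / 3 := by positivity
  set m : ℤ := ⌊θ / (π / 3)⌋
  have hm_le : (m : ℝ) * (π / 3) ≤ θ := (le_div_iff₀ hπ).mp (Int.floor_le _)
  have hle_m : θ ≤ ((m : ℝ) + 1) * (π / 3) := ((div_lt_iff₀ hπ).mp (Int.lt_floor_add_one _)).le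
  rcases Int.even_or_odd m with hm | hm
  · exact Or.inl ⟨m, hm, hm_le, hle_m⟩
  · refine Or.inr ⟨m + 3, hm.add_odd (by decide), ?_, ?_⟩ <;> push_cast <;> linarith

lemma equatorPoint_add_pi (θ : ℝ) : equatorPoint (θ + π) = -equatorPoint θ := by
  ext i
  fin_cases i <;> simp [equatorPoint]

lemma exists_cos_sin_eq {x y : ℝ} (h : x ^ 2 + y ^ 2 = 1) : ∃ θ, cos θ = x ∧ sin θ = y := by
  set z : ℂ := ⟨x, y⟩
  have hz : ‖z‖ = 1 := by simp [Complex.norm_eq_sqrt_sq_add_sq, z, h]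
  refine ⟨z.arg, ?_, ?_⟩
  · simpa [hz] using Complex.norm_mul_cos_arg z
  · simpa [hz] using Complex.norm_mul_sin_arg z

lemma exists_equatorPoint_eq {u : EuclideanSpace ℝ (Fin 3)} (hu : ‖u‖ = 1) (hu₂ : u 2 = 0) :
    ∃ θ, equatorPoint θ = u := by
  have h : u 0 ^ 2 + u 1 ^ 2 = 1 := by
    simpa [Fin.sum_univ_three, hu, hu₂] using (EuclideanSpace.real_norm_sq_eq u).symm
  obtain ⟨θ, hcos, hsin⟩ := exists_cos_sin_eq h
  refine ⟨θ, ?_⟩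
  ext i
  fin_cases i <;> simp [equatorPoint, hcos, hsin, hu₂]

lemma exists_norm_eq_one_mem_ker_of_one_lt_finrank {V : Type*} [NormedAddCommGroup V]
    [NormedSpace ℝ V] {W : Submodule ℝ V} [FiniteDimensional ℝ W] (hW : 1 < Module.finrank ℝ W)
    (f : V →ₗ[ℝ] ℝ) :
    ∃ u ∈ W, ‖u‖ = 1 ∧ f u = 0 := by
  have hker : LinearMap.ker (f ∘ₗ W.subtype) ≠ ⊥ :=
    LinearMap.ker_ne_bot_of_finrank_lt (by rwa [Module.finrank_self])
  obtain ⟨w, hw, hw₀⟩ := Submodule.exists_mem_ne_zero_of_ne_bot hker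
  refine ⟨‖(w : V)‖⁻¹ • (w : V), W.smul_mem _ w.2, norm_smul_inv_norm (by simpa using hw₀), ?_⟩
  rw [map_smul, show f w = 0 from hw, smul_zero]

/-- The region `Ω` contains no closed geodesic of `S²`: no great circle (the
intersection of `S²` with a 2-dimensional linear subspace of `ℝ³`) is contained
in `Ω`. -/
theorem kendall_region_contains_no_closed_geodesic :
    ∀ W : Submodule ℝ (EuclideanSpace ℝ (Fin 3)), Module.finrank ℝ W = 2 →
      ¬ ((Metric.sphere (0 : EuclideanSpace ℝ (Fin 3)) 1 ∩ (W : Set (EuclideanSpace ℝ (Fin 3)))) ⊆ Omega) := by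
  intro W hW hsub
  obtain ⟨u, huW, hu, hu₂⟩ :=
    exists_norm_eq_one_mem_ker_of_one_lt_finrank (W := W) (by omega)
      (EuclideanSpace.proj (2 : Fin 3) : EuclideanSpace ℝ (Fin 3) →L[ℝ] ℝ).toLinearMap
  obtain ⟨θ, rfl⟩ := exists_equatorPoint_eq hu hu₂
  rcases mem_removedAngles_or_add_pi_mem θ with hθ | hθ
  · exact (hsub ⟨mem_sphere_zero_iff_norm.mpr hu, huW⟩).2 ⟨θ, hθ, rfl⟩
  · refine (hsub ⟨mem_sphere_zero_iff_norm.mpr (by rwa [norm_neg]), W.neg_mem huW⟩).2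
      ⟨θ + π, hθ, (equatorPoint_add_pi θ).symm⟩
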